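/- Let F be a field, let p be a natural number whose image in F is nonzero, and let σ̄, τ̄ ∈ PGL₂(F) with τ̄ the class of the matrix [[1,1],[0,1]]. If σ̄ τ̄ σ̄⁻¹ = τ̄^p, then σ̄ is the class of a matrix of the form [[p, b],[0, 1]] for some b ∈ F. -/

import Mathlib

/-- `GL₂(F)`. -/
abbrev GL2 (F : Type*) [Field F] := Matrix.GeneralLinearGroup (Fin 2) F

/-- `PGL₂(F)`: the quotient of `GL₂(F)` by its center. -/
abbrev PGL2 (F : Type*) [Field F] := GL2 F ⧸ Subgroup.center (GL2 F)

/-!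
Lift `σ̄` to `s ∈ GL₂(F)`. Since the center of `GL₂(F)` consists of scalars, the hypothesis says
`u • s t s⁻¹ = t^p` for a scalar `u`. Both `t` and `t^p = [[1,p],[0,1]]` have trace `2` and
determinant `1`, so `2u = 2` and `u² = 1`, whence `(u - 1)² = 0` and `u = 1` in every
characteristic. Then `s t = t^p s` forces `s = [[p d, b],[0, d]]`, which is `d • [[p, b/d],[0, 1]]`.
-/

open Matrix

section
variable {R : Type*} [CommRing R]

lemma Matrix.unipotent_pow (a : R) (n : ℕ) : !![1, a; 0, 1] ^ n = !![1, n * a; 0, 1] := by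
  induction n with
  | zero => simp [one_fin_two]
  | succ k ih =>
    rw [pow_succ, ih, mul_fin_two]
    norm_num [add_mul, add_comm]

lemma Matrix.eq_one_of_trace_det_smul [IsReduced R] {M : Matrix (Fin 2) (Fin 2) R} {r : R}
    (htr : M.trace = 2) (hdet : M.det = 1) (htr' : (r • M).trace = 2)
    (hdet' : (r • M).det = 1) : r = 1 := by
  rw [trace_smul, htr, smul_eq_mul] at htr'
  rw [det_smul, hdet, Fintype.card_fin, mul_one] at hdet'
  have : IsNilpotent (r - 1) := ⟨2, by linear_combination hdet' - htr'⟩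
  exact sub_eq_zero.mp this.eq_zero

lemma Matrix.GeneralLinearGroup.eq_one_of_conj_mul_scalar_eq [IsReduced R]
    {s g h : GL (Fin 2) R} {u : Rˣ} (hg : (g : Matrix (Fin 2) (Fin 2) R).trace = 2)
    (hg' : (g : Matrix (Fin 2) (Fin 2) R).det = 1)
    (hh : (h : Matrix (Fin 2) (Fin 2) R).trace = 2)
    (hh' : (h : Matrix (Fin 2) (Fin 2) R).det = 1)
    (e : s * g * s⁻¹ * GeneralLinearGroup.scalar _ u = h) : u = 1 := by
  have hconj : (u : R) • ((s * g * s⁻¹ : GL (Fin 2) R) : Matrix (Fin 2) (Fin 2) R) = h := by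
    rw [← e, Units.val_mul _ (GeneralLinearGroup.scalar _ u), GeneralLinearGroup.coe_scalar,
      scalar_apply, smul_eq_mul_diagonal]
  refine Units.ext <| eq_one_of_trace_det_smul ?_ ?_ (hconj ▸ hh) (hconj ▸ hh')
  · rw [Units.val_mul, Units.val_mul, trace_mul_cycle, s.inv_mul, one_mul, hg]
  · rw [Units.val_mul, Units.val_mul, det_units_conj, hg']

lemma Matrix.eq_of_mul_unipotent_eq {S : Matrix (Fin 2) (Fin 2) R} {c : R}
    (h : S * !![1, 1; 0, 1] = !![1, c; 0, 1] * S) : S = !![c * S 1 1, S 0 1; 0, S 1 1] := by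
  have h01 := congrFun (congrFun h 0) 1
  have h11 := congrFun (congrFun h 1) 1
  simp only [Fin.isValue, mul_apply, of_apply, cons_val', cons_val_one, cons_val_fin_one,
    Fin.sum_univ_two, cons_val_zero, mul_one, one_mul, zero_mul, zero_add, add_eq_right]
    at h01 h11
  have h00 : S 0 0 = c * S 1 1 := by linear_combination h01
  conv_lhs => rw [eta_fin_two S]
  rw [h00, h11]

end

lemma Matrix.GeneralLinearGroup.mk_eq_mk_iff_exists_scalar {n R : Type*} [Fintype n]
    [DecidableEq n] [CommRing R] {g₁ g₂ : GL n R} :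
    (g₁ : GL n R ⧸ Subgroup.center (GL n R)) = g₂ ↔
      ∃ u : Rˣ, g₁ * GeneralLinearGroup.scalar n u = g₂ :=
  ProjGenLinGroup.mk_eq_mk_iff

lemma Matrix.GeneralLinearGroup.exists_mk_eq_of_val_eq {F : Type*} [Field F] {s : GL (Fin 2) F}
    {c b d : F} (hc : c ≠ 0) (hs : (s : Matrix (Fin 2) (Fin 2) F) = !![c * d, b; 0, d]) :
    ∃ (b' : F) (g : GL (Fin 2) F), (g : Matrix (Fin 2) (Fin 2) F) = !![c, b'; 0, 1] ∧
      (s : GL (Fin 2) F ⧸ Subgroup.center (GL (Fin 2) F)) = g := by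
  have hd : d ≠ 0 := by
    rintro rfl
    simpa [hs, det_fin_two_of] using s.det_ne_zero
  have hg : (!![c, b / d; 0, 1]).det ≠ 0 := by simpa [det_fin_two_of] using hc
  refine ⟨b / d, GeneralLinearGroup.mkOfDetNeZero _ hg, rfl, ?_⟩
  refine (GeneralLinearGroup.mk_eq_mk_iff_exists_scalar.mpr ⟨Units.mk0 d hd, Units.ext ?_⟩).symm
  rw [Units.val_mul, GeneralLinearGroup.coe_scalar, scalar_apply, ← smul_eq_mul_diagonal, hs]
  ext i j
  fin_cases i <;> fin_cases j <;>
    simp [GeneralLinearGroup.mkOfDetNeZero, mul_div_cancel₀ _ hd, mul_comm]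

/-- Let `F` be a field, `p` a natural number whose image in `F` is nonzero, and let
`σ̄, τ̄ ∈ PGL₂(F)` with `τ̄` the class of the matrix `[[1,1],[0,1]]`.  If
`σ̄ τ̄ σ̄⁻¹ = τ̄^p`, then `σ̄` is the class of a matrix of the form `[[p, b],[0, 1]]`
for some `b ∈ F`. -/
theorem conj_of_unipotent_eq_pow (F : Type*) [Field F] (p : ℕ) (hp : (p : F) ≠ 0)
    (σbar τbar : PGL2 F) (t : GL2 F)
    (ht : (t : Matrix (Fin 2) (Fin 2) F) = !![1, 1; 0, 1])
    (hτ : τbar = QuotientGroup.mk t)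
    (hconj : σbar * τbar * σbar⁻¹ = τbar ^ p) :
    ∃ (b : F) (g : GL2 F), (g : Matrix (Fin 2) (Fin 2) F) = !![(p : F), b; 0, 1] ∧
      σbar = QuotientGroup.mk g := by
  obtain ⟨s, rfl⟩ := QuotientGroup.mk_surjective σbar
  subst hτ
  have htp : ((t ^ p : GL2 F) : Matrix (Fin 2) (Fin 2) F) = !![1, (p : F); 0, 1] := by
    rw [Units.val_pow_eq_pow_val, ht, unipotent_pow, mul_one]
  rw [← QuotientGroup.mk_inv, ← QuotientGroup.mk_mul, ← QuotientGroup.mk_mul,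
    ← QuotientGroup.mk_pow] at hconj
  obtain ⟨u, hu⟩ := GeneralLinearGroup.mk_eq_mk_iff_exists_scalar.mp hconj
  have hu_one : u = 1 := GeneralLinearGroup.eq_one_of_conj_mul_scalar_eq
    (by simp [ht, trace_fin_two_of, one_add_one_eq_two]) (by simp [ht, det_fin_two_of])
    (by simp [htp, trace_fin_two_of, one_add_one_eq_two]) (by simp [htp, det_fin_two_of]) hu
  have hst : (s : Matrix (Fin 2) (Fin 2) F) * !![1, 1; 0, 1] =
      !![1, (p : F); 0, 1] * (s : Matrix (Fin 2) (Fin 2) F) := by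
    rw [← ht, ← htp, ← Units.val_mul, ← Units.val_mul, ← hu, hu_one]
    simp
  exact GeneralLinearGroup.exists_mk_eq_of_val_eq hp (eq_of_mul_unipotent_eq hst)
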